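/- Let (G,E) be a self-similar groupoid action on the path space of a finite directed graph E with no sources, and let 𝒮(G,E) = {(α,g,β) : α,β ∈ E*, g ∈ G with t(g) = s(α), d(g) = s(β)} ∪ {0} with the stated operations. Then 𝒮(G,E) is an inverse semigroup: the multiplication is associative; each nonzero s = (α,g,β) satisfies s s* s = s and s* s s* = s* where s* = (β,g⁻¹,α); idempotents commute, and the nonzero idempotents are exactly the elements z_α = (α, s(α), α) for α ∈ E*. Moreover (α,g,β)(β,h,ω) = (α, gh, ω) whenever (g,h) is composable in G. -/

import Mathlib

attribute [local instance] Classical.propDecidable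

/-- A directed graph `E = (E⁰, E¹, r, s)`. -/
structure DGraph where
  V : Type
  Edge : Type
  r : Edge → V
  s : Edge → V

/-- `E.chain v l w` says that the list of edges `l` forms a path with range `v`
and source `w`: consecutive edges satisfy `r e_{i+1} = s e_i`. -/
def DGraph.chain (E : DGraph) : E.V → List E.Edge → E.V → Prop
  | v, [], w => v = w
  | v, e :: l, w => E.r e = v ∧ E.chain (E.s e) l w

theorem DGraph.chain_append (E : DGraph) :
    ∀ (l₁ : List E.Edge) (v w x : E.V) (l₂ : List E.Edge),
      E.chain v l₁ w → E.chain w l₂ x → E.chain v (l₁ ++ l₂) x := by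
  intro l₁
  induction l₁ with
  | nil =>
      intro v w x l₂ h1 h2
      have hvw : v = w := h1
      rw [List.nil_append]
      exact hvw ▸ h2
  | cons e l ih =>
      intro v w x l₂ h1 h2
      have h1' : E.r e = v ∧ E.chain (E.s e) l w := h1
      exact ⟨h1'.1, ih _ _ _ _ h1'.2 h2⟩

/-- A finite path in the graph `E`: a range vertex `r μ`, a compatible list of
edges, and a source vertex `s μ`.  Vertices are the paths with no edges. -/
structure Pth (E : DGraph) where
  rng : E.V
  edges : List E.Edge
  src : E.V
  ok : E.chain rng edges src

/-- The length-zero path at a vertex `v`. -/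
def Pth.ofVertex {E : DGraph} (v : E.V) : Pth E := ⟨v, [], v, rfl⟩

/-- The length-one path given by an edge `e`. -/
def Pth.ofEdge {E : DGraph} (e : E.Edge) : Pth E :=
  ⟨E.r e, [e], E.s e, ⟨rfl, rfl⟩⟩

/-- Concatenation `μ ν` of paths (meaningful when `r ν = s μ`; junk otherwise). -/
noncomputable def Pth.concat {E : DGraph} (μ ν : Pth E) : Pth E :=
  if h : ν.rng = μ.src then
    ⟨μ.rng, μ.edges ++ ν.edges, ν.src,
      E.chain_append μ.edges μ.rng μ.src ν.src ν.edges μ.ok (h ▸ ν.ok)⟩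
  else μ

/-- A (discrete) groupoid with unit space `V`: `d` and `t` are the domain and
terminus maps, `unit v = id_v`, and a pair `(g, h)` is composable when `d g = t h`. -/
structure VGroupoid (V : Type) (α : Type*) where
  d : α → V
  t : α → V
  mul : α → α → α
  inv : α → α
  unit : V → α
  d_unit : ∀ v, d (unit v) = v
  t_unit : ∀ v, t (unit v) = v
  d_inv : ∀ g, d (inv g) = t g
  t_inv : ∀ g, t (inv g) = d g
  d_mul : ∀ g h, d g = t h → d (mul g h) = d h
  t_mul : ∀ g h, d g = t h → t (mul g h) = t g
  mul_assoc : ∀ g h k, d g = t h → d h = t k → mul (mul g h) k = mul g (mul h k)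
  unit_mul : ∀ g, mul (unit (t g)) g = g
  mul_unit : ∀ g, mul g (unit (d g)) = g
  inv_mul : ∀ g, mul (inv g) g = unit (d g)
  mul_inv : ∀ g, mul g (inv g) = unit (t g)
  inv_inv : ∀ g, inv (inv g) = g

/-- A self-similar groupoid action `(G, E)` on the path space of the graph `E`:
a groupoid `G` with unit space `E⁰` together with a faithful action by partial
isomorphisms of the forest `T_E` — each `g ∈ G` maps `d(g) E*` bijectively onto
`t(g) E*` preserving path length, sending vertices to vertices and preserving the
edge relation of `T_E` — such that for every `g ∈ G` and every edge
`e ∈ d(g) E¹` there is a unique restriction `g|_e ∈ G` with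
`g · (e μ) = (g · e)(g|_e · μ)` for all `μ ∈ s(e) E*`. -/
structure SelfSimilar (E : DGraph) (α : Type*) extends VGroupoid E.V α where
  act : α → Pth E → Pth E
  act_rng : ∀ g μ, μ.rng = d g → (act g μ).rng = t g
  act_len : ∀ g μ, μ.rng = d g → (act g μ).edges.length = μ.edges.length
  act_vertex : ∀ g, act g (Pth.ofVertex (d g)) = Pth.ofVertex (t g)
  act_mul : ∀ g h μ, d g = t h → μ.rng = d h → act (mul g h) μ = act g (act h μ)
  act_unit : ∀ v μ, μ.rng = v → act (unit v) μ = μ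
  act_surj : ∀ g ν, ν.rng = t g → ∃ μ, μ.rng = d g ∧ act g μ = ν
  act_edge : ∀ g μ e, μ.rng = d g → E.r e = μ.src →
      ∃ e' : E.Edge, act g (μ.concat (Pth.ofEdge e)) = (act g μ).concat (Pth.ofEdge e')
  faithful : ∀ g₁ g₂, d g₁ = d g₂ → (∀ μ, μ.rng = d g₁ → act g₁ μ = act g₂ μ) → g₁ = g₂
  res : α → E.Edge → α
  res_d : ∀ g e, E.r e = d g → d (res g e) = E.s e
  res_spec : ∀ g e μ, E.r e = d g → μ.rng = E.s e →
      act g ((Pth.ofEdge e).concat μ) = (act g (Pth.ofEdge e)).concat (act (res g e) μ)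
  res_unique : ∀ g e k, E.r e = d g → d k = E.s e →
      (∀ μ, μ.rng = E.s e →
        act g ((Pth.ofEdge e).concat μ) = (act g (Pth.ofEdge e)).concat (act k μ)) →
      k = res g e

/-- Membership in the inverse semigroup `𝒮(G, E)`: the zero element (`none`) and the
triples `(α, g, β)` with `α, β ∈ E*` and `g ∈ G_{s β}^{s α}`. -/
def SGEMem {E : DGraph} {α : Type*} (S : SelfSimilar E α) :
    Option (Pth E × α × Pth E) → Prop
  | none => True
  | some x => S.t x.2.1 = x.1.src ∧ S.d x.2.1 = x.2.2.src

/-- The involution of `𝒮(G, E)`: `(α, g, β)* = (β, g⁻¹, α)` and `0* = 0`. -/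
def SGEStar {E : DGraph} {α : Type*} (S : SelfSimilar E α) :
    Option (Pth E × α × Pth E) → Option (Pth E × α × Pth E)
  | none => none
  | some x => some (x.2.2, S.inv x.2.1, x.1)


/-!
An element `(α, g, β)` of `𝒮(G, E)` acts on `E*` as the partial bijection `βμ ↦ α(g·μ)`, and
the product of `𝒮(G, E)` acts as the composite of partial maps. By faithfulness of the action this
representation is injective, so associativity is inherited from composition of partial maps, and
the nonzero idempotents, which act as the partial identities of the cylinders `αE*`, commute.
The remaining identities are instances of `(α, g, β)(β, h, ω) = (α, gh, ω)`, the case `μ = s(β)`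
of the multiplication rule, since `g|_{s(β)} = g`.
-/

def DGraph.NoSources (E : DGraph) : Prop := ∀ v : E.V, ∃ e : E.Edge, E.r e = v

namespace DGraph

variable (E : DGraph)

theorem chain_src_unique : ∀ {l : List E.Edge} {v w w' : E.V},
    E.chain v l w → E.chain v l w' → w = w'
  | [], _, _, _, h, h' => (show _ = _ from h).symm.trans h'
  | _ :: _, _, _, _, h, h' => chain_src_unique h.2 h'.2

theorem exists_chain_of_chain_append : ∀ {l₁ l₂ : List E.Edge} {v w : E.V},
    E.chain v (l₁ ++ l₂) w → ∃ u, E.chain v l₁ u ∧ E.chain u l₂ w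
  | [], _, v, _, h => ⟨v, rfl, h⟩
  | _ :: _, _, _, _, h =>
      let ⟨u, h₁, h₂⟩ := exists_chain_of_chain_append h.2
      ⟨u, ⟨h.1, h₁⟩, h₂⟩

end DGraph

namespace Pth

variable {E : DGraph} {μ ν ρ π : Pth E}

theorem ext (h_rng : μ.rng = ν.rng) (h_edges : μ.edges = ν.edges) (h_src : μ.src = ν.src) :
    μ = ν := by
  cases μ; cases ν; cases h_rng; cases h_edges; cases h_src; rfl

theorem eq_ofVertex_of_edges_eq_nil (h : μ.edges = []) : μ = ofVertex μ.rng := by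
  have hok := μ.ok
  rw [h] at hok
  exact ext rfl h (show μ.rng = μ.src from hok).symm

theorem concat_rng (h : ν.rng = μ.src) : (μ.concat ν).rng = μ.rng := by
  rw [concat, dif_pos h]

theorem concat_edges (h : ν.rng = μ.src) : (μ.concat ν).edges = μ.edges ++ ν.edges := by
  rw [concat, dif_pos h]

theorem concat_src (h : ν.rng = μ.src) : (μ.concat ν).src = ν.src := by
  rw [concat, dif_pos h]

theorem concat_ofVertex (μ : Pth E) : μ.concat (ofVertex μ.src) = μ :=
  ext (concat_rng rfl) ((concat_edges rfl).trans μ.edges.append_nil) (concat_src rfl)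

theorem ofVertex_concat {v : E.V} (h : μ.rng = v) : (ofVertex v).concat μ = μ :=
  ext ((concat_rng h).trans h.symm) (concat_edges h) (concat_src h)

theorem concat_assoc (hν : ν.rng = μ.src) (hρ : ρ.rng = ν.src) :
    (μ.concat ν).concat ρ = μ.concat (ν.concat ρ) := by
  have h₁ : ρ.rng = (μ.concat ν).src := hρ.trans (concat_src hν).symm
  have h₂ : (ν.concat ρ).rng = μ.src := (concat_rng hρ).trans hν
  apply ext
  · rw [concat_rng h₁, concat_rng hν, concat_rng h₂]
  · rw [concat_edges h₁, concat_edges hν, concat_edges h₂, concat_edges hρ, List.append_assoc]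
  · rw [concat_src h₁, concat_src h₂, concat_src hρ]

theorem concat_left_cancel (hν : ν.rng = μ.src) (hρ : ρ.rng = μ.src)
    (h : μ.concat ν = μ.concat ρ) : ν = ρ := by
  have h_edges := congrArg edges h
  have h_src := congrArg src h
  rw [concat_edges hν, concat_edges hρ] at h_edges
  rw [concat_src hν, concat_src hρ] at h_src
  exact ext (hν.trans hρ.symm) (List.append_cancel_left h_edges) h_src

theorem eq_ofVertex_of_concat_eq_self (hν : ν.rng = μ.src) (h : μ.concat ν = μ) :
    ν = ofVertex μ.src := by
  have hlen := congrArg (fun π : Pth E => π.edges.length) h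
  simp only [concat_edges hν, List.length_append] at hlen
  rw [eq_ofVertex_of_edges_eq_nil (μ := ν) (List.eq_nil_of_length_eq_zero (by omega)), hν]

def IsPrefix (μ π : Pth E) : Prop := ∃ ν : Pth E, ν.rng = μ.src ∧ π = μ.concat ν

theorem isPrefix_concat (h : ν.rng = μ.src) : μ.IsPrefix (μ.concat ν) := ⟨ν, h, rfl⟩

theorem IsPrefix.antisymm (h₁ : μ.IsPrefix π) (h₂ : π.IsPrefix μ) : μ = π := by
  obtain ⟨ν, hν, rfl⟩ := h₁
  obtain ⟨ρ, hρ, h⟩ := h₂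
  have hlen := congrArg (fun π : Pth E => π.edges.length) h
  simp only [concat_edges hρ, concat_edges hν, List.length_append] at hlen
  rw [eq_ofVertex_of_edges_eq_nil (μ := ν) (List.eq_nil_of_length_eq_zero (by omega)), hν,
    concat_ofVertex]

theorem isPrefix_of_edges_prefix (hr : μ.rng = π.rng) (hp : μ.edges <+: π.edges) :
    μ.IsPrefix π := by
  obtain ⟨rest, hrest⟩ := hp
  obtain ⟨u, hu, h_rest⟩ := E.exists_chain_of_chain_append (hrest ▸ π.ok)
  obtain rfl : u = μ.src := E.chain_src_unique hu (hr ▸ μ.ok)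
  let ν : Pth E := ⟨μ.src, rest, π.src, h_rest⟩
  have hν : ν.rng = μ.src := rfl
  exact ⟨ν, hν, ext (hr.symm.trans (concat_rng hν).symm)
    (hrest.symm.trans (concat_edges hν).symm) (concat_src hν).symm⟩

theorem isPrefix_or_isPrefix_of_concat_eq {b l σ θ : Pth E} (hσ : σ.rng = b.src)
    (hθ : θ.rng = l.src) (h : b.concat σ = l.concat θ) : l.IsPrefix b ∨ b.IsPrefix l := by
  have hr : b.rng = l.rng := by
    simpa only [concat_rng hσ, concat_rng hθ] using congrArg rng h
  have he := congrArg edges h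
  rw [concat_edges hσ, concat_edges hθ] at he
  rcases List.prefix_or_prefix_of_prefix (List.prefix_append b.edges σ.edges)
      (he ▸ List.prefix_append l.edges θ.edges) with hp | hp
  · exact Or.inr (isPrefix_of_edges_prefix hr hp)
  · exact Or.inl (isPrefix_of_edges_prefix hr.symm hp)

end Pth

namespace VGroupoid

variable {V : Type} {α : Type*} (G : VGroupoid V α)

theorem unit_mul_unit (v : V) : G.mul (G.unit v) (G.unit v) = G.unit v := by
  simpa only [G.t_unit] using G.unit_mul (G.unit v)

theorem eq_unit_of_mul_self {g : α} (hd : G.d g = G.t g) (h : G.mul g g = g) :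
    g = G.unit (G.t g) := by
  have h' : G.mul (G.mul g g) (G.inv g) = G.mul g (G.inv g) := by rw [h]
  rw [G.mul_assoc g g (G.inv g) hd (G.t_inv g).symm, G.mul_inv] at h'
  rw [← h', ← hd, G.mul_unit]

end VGroupoid

namespace SelfSimilar

variable {E : DGraph} {α : Type*} (S : SelfSimilar E α)

theorem act_ofVertex {g : α} {v : E.V} (h : v = S.d g) :
    S.act g (Pth.ofVertex v) = Pth.ofVertex (S.t g) := by
  rw [h, S.act_vertex]

theorem act_inv_act {g : α} {μ : Pth E} (h : μ.rng = S.d g) :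
    S.act (S.inv g) (S.act g μ) = μ := by
  rw [← S.act_mul _ _ _ (S.d_inv g) h, S.inv_mul, S.act_unit _ _ h]

theorem act_act_inv {g : α} {ν : Pth E} (h : ν.rng = S.t g) :
    S.act g (S.act (S.inv g) ν) = ν := by
  simpa only [S.inv_inv] using S.act_inv_act (g := S.inv g) (h.trans (S.d_inv g).symm)

theorem rng_act_inv {h : α} {μ : Pth E} (hμ : μ.rng = S.t h) :
    (S.act (S.inv h) μ).rng = S.d h := by
  rw [S.act_rng _ _ (hμ.trans (S.d_inv h).symm), S.t_inv]

theorem edges_eq_nil_of_act {g : α} {μ : Pth E} (h : μ.rng = S.d g)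
    (he : (S.act g μ).edges = []) : μ.edges = [] :=
  List.eq_nil_of_length_eq_zero (by rw [← S.act_len g μ h, he, List.length_nil])

noncomputable def pathMap : Option (Pth E × α × Pth E) → Pth E → Option (Pth E)
  | none, _ => none
  | some (a, g, b), π => if h : b.IsPrefix π then some (a.concat (S.act g h.choose)) else none

theorem pathMap_concat {a b μ : Pth E} (g : α) (hμ : μ.rng = b.src) :
    S.pathMap (some (a, g, b)) (b.concat μ) = some (a.concat (S.act g μ)) := by
  have hpre : b.IsPrefix (b.concat μ) := Pth.isPrefix_concat hμ
  obtain ⟨hr, he⟩ := hpre.choose_spec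
  rw [pathMap, dif_pos hpre, Pth.concat_left_cancel hr hμ he.symm]

theorem pathMap_of_not_isPrefix {a b π : Pth E} (g : α) (h : ¬b.IsPrefix π) :
    S.pathMap (some (a, g, b)) π = none := by
  rw [pathMap, dif_neg h]

theorem isPrefix_of_pathMap_eq_some {a b π ρ : Pth E} {g : α}
    (h : S.pathMap (some (a, g, b)) π = some ρ) : b.IsPrefix π := by
  by_contra hn
  rw [S.pathMap_of_not_isPrefix g hn] at h
  cases h

theorem pathMap_self {a b : Pth E} {g : α} (hga : S.t g = a.src) (hgb : S.d g = b.src) :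
    S.pathMap (some (a, g, b)) b = some a :=
  calc S.pathMap (some (a, g, b)) b
      = S.pathMap (some (a, g, b)) (b.concat (Pth.ofVertex b.src)) := by
        rw [Pth.concat_ofVertex]
    _ = some a := by
        rw [S.pathMap_concat g rfl, S.act_ofVertex hgb.symm, hga, Pth.concat_ofVertex]

theorem pathMap_unit (c : Pth E) :
    S.pathMap (some (c, S.unit c.src, c)) = fun π => if c.IsPrefix π then some π else none := by
  funext π
  split_ifs with h
  · obtain ⟨ν, hν, rfl⟩ := h
    rw [S.pathMap_concat _ hν, S.act_unit _ _ hν]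
  · exact S.pathMap_of_not_isPrefix _ h

theorem pathMap_injOn {x y : Option (Pth E × α × Pth E)} (hx : SGEMem S x) (hy : SGEMem S y)
    (he : S.pathMap x = S.pathMap y) : x = y := by
  rcases x with _ | ⟨a, g, b⟩ <;> rcases y with _ | ⟨p, h, q⟩
  · rfl
  · have hq := congrFun he q
    rw [S.pathMap_self hy.1 hy.2] at hq
    cases hq
  · have hb := congrFun he b
    rw [S.pathMap_self hx.1 hx.2] at hb
    cases hb
  · obtain ⟨hga, hgb⟩ := hx
    obtain ⟨hhp, hhq⟩ := hy
    have hb := congrFun he b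
    have hq := congrFun he q
    rw [S.pathMap_self hga hgb] at hb
    rw [S.pathMap_self hhp hhq] at hq
    have hbq : b = q :=
      (S.isPrefix_of_pathMap_eq_some hq).antisymm (S.isPrefix_of_pathMap_eq_some hb.symm)
    subst hbq
    rw [S.pathMap_self hhp hhq] at hb
    obtain rfl : a = p := Option.some.inj hb
    obtain rfl : g = h := S.faithful g h (hgb.trans hhq.symm) fun ν hν => by
      have hν' : ν.rng = b.src := hν.trans hgb
      have hbν := congrFun he (b.concat ν)
      rw [S.pathMap_concat g hν', S.pathMap_concat h hν'] at hbν
      exact Pth.concat_left_cancel ((S.act_rng g ν hν).trans hga)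
        ((S.act_rng h ν (hν.trans (hgb.trans hhq.symm))).trans hhp) (Option.some.inj hbν)
    rfl

theorem pathMap_comp_eq_none_of_not_isPrefix {a b p q : Pth E} {g h : α}
    (hhp : S.t h = p.src) (hhq : S.d h = q.src) (h₁ : ¬p.IsPrefix b) (h₂ : ¬b.IsPrefix p) :
    (fun π => (S.pathMap (some (p, h, q)) π).bind (S.pathMap (some (a, g, b)))) =
      fun _ => none := by
  funext π
  by_cases hqπ : q.IsPrefix π
  · obtain ⟨σ, hσ, rfl⟩ := hqπ
    rw [S.pathMap_concat h hσ, Option.bind_some, S.pathMap_of_not_isPrefix g]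
    rintro ⟨τ, hτ, hτe⟩
    have hθ : (S.act h σ).rng = p.src := (S.act_rng h σ (hσ.trans hhq.symm)).trans hhp
    exact (Pth.isPrefix_or_isPrefix_of_concat_eq hτ hθ hτe.symm).elim h₁ h₂
  · rw [S.pathMap_of_not_isPrefix h hqπ]
    rfl

structure IsPathRestriction (resP : α → Pth E → α) : Prop where
  d_res : ∀ g μ, μ.rng = S.d g → S.d (resP g μ) = μ.src
  act_concat : ∀ g μ ν, μ.rng = S.d g → ν.rng = μ.src →
      S.act g (μ.concat ν) = (S.act g μ).concat (S.act (resP g μ) ν)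

namespace IsPathRestriction

variable {S} {resP : α → Pth E → α} (hR : S.IsPathRestriction resP) (hns : E.NoSources)
include hR hns

/-- Extend `μ` by an edge `e` at `s(μ)`: if `t(g|_μ) ≠ s(g·μ)`, the junk value of the
concatenation in `act_concat` would make `g·(μe)` as short as `g·μ`. -/
theorem t_res {g : α} {μ : Pth E} (hμ : μ.rng = S.d g) : S.t (resP g μ) = (S.act g μ).src := by
  obtain ⟨e, he⟩ := hns μ.src
  have he' : (Pth.ofEdge e).rng = μ.src := he
  by_contra hne
  have hjunk : ¬(S.act (resP g μ) (Pth.ofEdge e)).rng = (S.act g μ).src := by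
    rwa [S.act_rng _ _ (he'.trans (hR.d_res g μ hμ).symm)]
  have hlen := congrArg (fun π : Pth E => π.edges.length) (hR.act_concat g μ _ hμ he')
  rw [show (S.act g μ).concat _ = S.act g μ from dif_neg hjunk] at hlen
  simp only [S.act_len _ _ ((Pth.concat_rng he').trans hμ), S.act_len _ _ hμ,
    Pth.concat_edges he', List.length_append] at hlen
  simp [Pth.ofEdge] at hlen

theorem res_ofVertex (g : α) : resP g (Pth.ofVertex (S.d g)) = g := by
  have hd : S.d (resP g (Pth.ofVertex (S.d g))) = S.d g := hR.d_res g _ rfl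
  refine S.faithful _ _ hd fun ν hν => ?_
  have ht : S.t (resP g (Pth.ofVertex (S.d g))) = S.t g := by
    rw [hR.t_res hns rfl, S.act_vertex]; rfl
  have hν' : ν.rng = S.d g := hν.trans hd
  have h := hR.act_concat g (Pth.ofVertex (S.d g)) ν rfl hν'
  rwa [Pth.ofVertex_concat hν', S.act_vertex,
    Pth.ofVertex_concat ((S.act_rng _ ν hν).trans ht), eq_comm] at h

theorem pathMap_mul_of_isPrefix_left {a b p q ν : Pth E} {g h : α} (hgb : S.d g = b.src)
    (hhp : S.t h = p.src) (hhq : S.d h = q.src) (hν : ν.rng = S.d h)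
    (hb : b = p.concat (S.act h ν)) :
    S.pathMap (some (a, S.mul g (resP h ν), q.concat ν)) =
      fun π => (S.pathMap (some (p, h, q)) π).bind (S.pathMap (some (a, g, b))) := by
  funext π
  have hμ : (S.act h ν).rng = p.src := (S.act_rng h ν hν).trans hhp
  have hνq : ν.rng = q.src := hν.trans hhq
  have hbμ : b.src = (S.act h ν).src := by rw [hb, Pth.concat_src hμ]
  have hres_t : S.t (resP h ν) = b.src := by rw [hR.t_res hns hν, hbμ]
  have hres_d : S.d (resP h ν) = ν.src := hR.d_res h ν hν
  by_cases hπ : (q.concat ν).IsPrefix π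
  · obtain ⟨ρ, hρ, rfl⟩ := hπ
    have hρν : ρ.rng = ν.src := hρ.trans (Pth.concat_src hνq)
    have hτ : (S.act (resP h ν) ρ).rng = b.src := by
      rw [S.act_rng _ _ (hρν.trans hres_d.symm), hres_t]
    have hy : S.pathMap (some (p, h, q)) ((q.concat ν).concat ρ) =
        some (b.concat (S.act (resP h ν) ρ)) := by
      rw [Pth.concat_assoc hνq hρν, S.pathMap_concat h ((Pth.concat_rng hρν).trans hνq),
        hR.act_concat h ν ρ hν hρν, ← Pth.concat_assoc hμ (hτ.trans hbμ), ← hb]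
    rw [S.pathMap_concat _ hρ, hy, Option.bind_some, S.pathMap_concat g hτ,
      S.act_mul _ _ _ (hgb.trans hres_t.symm) (hρν.trans hres_d.symm)]
  · rw [S.pathMap_of_not_isPrefix _ hπ]
    by_cases hqπ : q.IsPrefix π
    · obtain ⟨σ, hσ, rfl⟩ := hqπ
      rw [S.pathMap_concat h hσ, Option.bind_some, S.pathMap_of_not_isPrefix g]
      -- `h·σ = (h·ν)τ` would force `σ = ν (h⁻¹|_{h·ν} · τ)`, contradicting `hπ`
      rintro ⟨τ, hτ, hτe⟩
      have hσd : σ.rng = S.d h := hσ.trans hhq.symm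
      have hθ : (S.act h σ).rng = p.src := (S.act_rng h σ hσd).trans hhp
      have hτμ : τ.rng = (S.act h ν).src := hτ.trans hbμ
      rw [hb, Pth.concat_assoc hμ hτμ] at hτe
      have hhσ : S.act h σ = (S.act h ν).concat τ :=
        Pth.concat_left_cancel hθ ((Pth.concat_rng hτμ).trans hμ) hτe
      have hμ' : (S.act h ν).rng = S.d (S.inv h) :=
        (S.act_rng h ν hν).trans (S.d_inv h).symm
      have hσ' : σ = ν.concat (S.act (resP (S.inv h) (S.act h ν)) τ) := by
        rw [← S.act_inv_act hσd, hhσ, hR.act_concat _ _ τ hμ' hτμ, S.act_inv_act hν]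
      have hτ' : (S.act (resP (S.inv h) (S.act h ν)) τ).rng = ν.src := by
        rw [S.act_rng _ _ (hτμ.trans (hR.d_res _ _ hμ').symm), hR.t_res hns hμ',
          S.act_inv_act hν]
      exact hπ ⟨_, hτ'.trans (Pth.concat_src hνq).symm,
        by rw [hσ', Pth.concat_assoc hνq hτ']⟩
    · rw [S.pathMap_of_not_isPrefix h hqπ]
      rfl

theorem pathMap_mul_of_isPrefix_right {a b p q μ : Pth E} {g h : α} (hga : S.t g = a.src)
    (hgb : S.d g = b.src) (hhp : S.t h = p.src) (hhq : S.d h = q.src) (hμ : μ.rng = b.src)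
    (hp : p = b.concat μ) :
    S.pathMap (some (a.concat (S.act g μ), S.mul (resP g μ) h, q)) =
      fun π => (S.pathMap (some (p, h, q)) π).bind (S.pathMap (some (a, g, b))) := by
  funext π
  by_cases hqπ : q.IsPrefix π
  · obtain ⟨σ, hσ, rfl⟩ := hqπ
    have hμd : μ.rng = S.d g := hμ.trans hgb.symm
    have hσd : σ.rng = S.d h := hσ.trans hhq.symm
    have hcomp : S.d (resP g μ) = S.t h := by
      rw [hR.d_res g μ hμd, hhp, hp, Pth.concat_src hμ]
    have hθ : (S.act h σ).rng = μ.src := by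
      rw [S.act_rng h σ hσd, ← hcomp, hR.d_res g μ hμd]
    have hgμ : (S.act g μ).rng = a.src := (S.act_rng g μ hμd).trans hga
    have hrθ : (S.act (resP g μ) (S.act h σ)).rng = (S.act g μ).src := by
      rw [S.act_rng _ _ (hθ.trans (hR.d_res g μ hμd).symm), hR.t_res hns hμd]
    rw [S.pathMap_concat _ hσ, S.pathMap_concat h hσ, Option.bind_some, hp,
      Pth.concat_assoc hμ hθ, S.pathMap_concat g ((Pth.concat_rng hθ).trans hμ),
      hR.act_concat g μ _ hμd hθ, ← Pth.concat_assoc hgμ hrθ, S.act_mul _ _ _ hcomp hσd]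
  · rw [S.pathMap_of_not_isPrefix _ hqπ, S.pathMap_of_not_isPrefix h hqπ]
    rfl

end IsPathRestriction

end SelfSimilar

section

variable {E : DGraph} {α : Type*}

theorem sgeStar_sgeStar (S : SelfSimilar E α) (x : Option (Pth E × α × Pth E)) :
    SGEStar S (SGEStar S x) = x := by
  rcases x with _ | ⟨a, g, b⟩
  · rfl
  · simp only [SGEStar, S.inv_inv]

theorem sgeMem_sgeStar {S : SelfSimilar E α} {x : Option (Pth E × α × Pth E)} (hx : SGEMem S x) :
    SGEMem S (SGEStar S x) := by
  rcases x with _ | ⟨a, g, b⟩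
  · trivial
  · exact ⟨(S.t_inv g).trans hx.2, (S.d_inv g).trans hx.1⟩

end

structure IsSGEMul {E : DGraph} {α : Type*} (S : SelfSimilar E α) (resP : α → Pth E → α)
    (m : Option (Pth E × α × Pth E) → Option (Pth E × α × Pth E) →
      Option (Pth E × α × Pth E)) : Prop where
  zero_mul : ∀ x, m none x = none
  mul_zero : ∀ x, m x none = none
  mul_of_isPrefix_left : ∀ (a : Pth E) (g : α) (b l : Pth E) (h : α) (w μ : Pth E),
      S.t g = a.src → S.d g = b.src → S.t h = l.src → S.d h = w.src →
      μ.rng = l.src → b = l.concat μ →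
      m (some (a, g, b)) (some (l, h, w)) =
        some (a, S.mul g (resP h (S.act (S.inv h) μ)), w.concat (S.act (S.inv h) μ))
  mul_of_isPrefix_right : ∀ (a : Pth E) (g : α) (b l : Pth E) (h : α) (w μ : Pth E),
      S.t g = a.src → S.d g = b.src → S.t h = l.src → S.d h = w.src →
      μ.rng = b.src → l = b.concat μ →
      m (some (a, g, b)) (some (l, h, w)) = some (a.concat (S.act g μ), S.mul (resP g μ) h, w)
  mul_of_not_isPrefix : ∀ (a : Pth E) (g : α) (b l : Pth E) (h : α) (w : Pth E),
      S.t g = a.src → S.d g = b.src → S.t h = l.src → S.d h = w.src →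
      ¬l.IsPrefix b → ¬b.IsPrefix l → m (some (a, g, b)) (some (l, h, w)) = none

namespace IsSGEMul

variable {E : DGraph} {α : Type*} {S : SelfSimilar E α} {resP : α → Pth E → α}
  {m : Option (Pth E × α × Pth E) → Option (Pth E × α × Pth E) → Option (Pth E × α × Pth E)}
  (hm : IsSGEMul S resP m) (hR : S.IsPathRestriction resP) (hns : E.NoSources)
include hm hR hns

theorem mul_of_composable {a b w : Pth E} {g h : α} (hga : S.t g = a.src) (hgb : S.d g = b.src)
    (hhb : S.t h = b.src) (hhw : S.d h = w.src) :
    m (some (a, g, b)) (some (b, h, w)) = some (a, S.mul g h, w) := by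
  rw [hm.mul_of_isPrefix_left a g b b h w _ hga hgb hhb hhw rfl (Pth.concat_ofVertex b).symm,
    S.act_ofVertex (hhb.symm.trans (S.d_inv h).symm), S.t_inv, hR.res_ofVertex hns, hhw,
    Pth.concat_ofVertex]

theorem mem_mul {x y : Option (Pth E × α × Pth E)} (hx : SGEMem S x) (hy : SGEMem S y) :
    SGEMem S (m x y) := by
  rcases x with _ | ⟨a, g, b⟩
  · rw [hm.zero_mul]; trivial
  rcases y with _ | ⟨p, h, q⟩
  · rw [hm.mul_zero]; trivial
  obtain ⟨hga, hgb⟩ := hx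
  obtain ⟨hhp, hhq⟩ := hy
  by_cases h₁ : p.IsPrefix b
  · obtain ⟨μ, hμ, hb⟩ := h₁
    rw [hm.mul_of_isPrefix_left a g b p h q μ hga hgb hhp hhq hμ hb]
    have hμh : μ.rng = S.t h := hμ.trans hhp.symm
    have hν := S.rng_act_inv hμh
    have hcomp : S.d g = S.t (resP h (S.act (S.inv h) μ)) := by
      rw [hR.t_res hns hν, S.act_act_inv hμh, hgb, hb, Pth.concat_src hμ]
    exact ⟨(S.t_mul _ _ hcomp).trans hga, (S.d_mul _ _ hcomp).trans
      (by rw [hR.d_res h _ hν, Pth.concat_src (hν.trans hhq)])⟩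
  by_cases h₂ : b.IsPrefix p
  · obtain ⟨μ, hμ, hp⟩ := h₂
    rw [hm.mul_of_isPrefix_right a g b p h q μ hga hgb hhp hhq hμ hp]
    have hμd : μ.rng = S.d g := hμ.trans hgb.symm
    have hcomp : S.d (resP g μ) = S.t h := by
      rw [hR.d_res g μ hμd, hhp, hp, Pth.concat_src hμ]
    exact ⟨(S.t_mul _ _ hcomp).trans
      (by rw [hR.t_res hns hμd, Pth.concat_src ((S.act_rng g μ hμd).trans hga)]),
      (S.d_mul _ _ hcomp).trans hhq⟩
  rw [hm.mul_of_not_isPrefix a g b p h q hga hgb hhp hhq h₁ h₂]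
  trivial

theorem pathMap_mul {x y : Option (Pth E × α × Pth E)} (hx : SGEMem S x) (hy : SGEMem S y) :
    S.pathMap (m x y) = fun π => (S.pathMap y π).bind (S.pathMap x) := by
  rcases x with _ | ⟨a, g, b⟩
  · rw [hm.zero_mul]
    funext π
    cases S.pathMap y π <;> rfl
  rcases y with _ | ⟨p, h, q⟩
  · rw [hm.mul_zero]
    rfl
  obtain ⟨hga, hgb⟩ := hx
  obtain ⟨hhp, hhq⟩ := hy
  by_cases h₁ : p.IsPrefix b
  · obtain ⟨μ, hμ, hb⟩ := h₁
    have hμh : μ.rng = S.t h := hμ.trans hhp.symm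
    rw [hm.mul_of_isPrefix_left a g b p h q μ hga hgb hhp hhq hμ hb]
    exact hR.pathMap_mul_of_isPrefix_left hns hgb hhp hhq (S.rng_act_inv hμh)
      (by rw [S.act_act_inv hμh]; exact hb)
  by_cases h₂ : b.IsPrefix p
  · obtain ⟨μ, hμ, hp⟩ := h₂
    rw [hm.mul_of_isPrefix_right a g b p h q μ hga hgb hhp hhq hμ hp]
    exact hR.pathMap_mul_of_isPrefix_right hns hga hgb hhp hhq hμ hp
  rw [hm.mul_of_not_isPrefix a g b p h q hga hgb hhp hhq h₁ h₂]
  exact (S.pathMap_comp_eq_none_of_not_isPrefix hhp hhq h₁ h₂).symm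

theorem mul_assoc {x y z : Option (Pth E × α × Pth E)} (hx : SGEMem S x) (hy : SGEMem S y)
    (hz : SGEMem S z) : m (m x y) z = m x (m y z) := by
  have hxy := hm.mem_mul hR hns hx hy
  have hyz := hm.mem_mul hR hns hy hz
  refine S.pathMap_injOn (hm.mem_mul hR hns hxy hz) (hm.mem_mul hR hns hx hyz) ?_
  rw [hm.pathMap_mul hR hns hxy hz, hm.pathMap_mul hR hns hx hy, hm.pathMap_mul hR hns hx hyz,
    hm.pathMap_mul hR hns hy hz]
  funext π
  exact (Option.bind_assoc _ _ _).symm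

theorem mul_star_mul {x : Option (Pth E × α × Pth E)} (hx : SGEMem S x) :
    m (m x (SGEStar S x)) x = x := by
  rcases x with _ | ⟨a, g, b⟩
  · rw [hm.zero_mul, hm.zero_mul]
  obtain ⟨hga, hgb⟩ := hx
  rw [SGEStar, hm.mul_of_composable hR hns hga hgb ((S.t_inv g).trans hgb)
      ((S.d_inv g).trans hga), S.mul_inv,
    hm.mul_of_composable hR hns ((S.t_unit _).trans hga) ((S.d_unit _).trans hga) hga hgb,
    S.unit_mul]

theorem mul_self_iff {x : Option (Pth E × α × Pth E)} (hx : SGEMem S x) (hx0 : x ≠ none) :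
    m x x = x ↔ ∃ c : Pth E, x = some (c, S.unit c.src, c) := by
  obtain ⟨⟨a, g, b⟩, rfl⟩ := Option.ne_none_iff_exists'.mp hx0
  have hga : S.t g = a.src := hx.1
  have hgb : S.d g = b.src := hx.2
  constructor
  · intro hxx
    have ha : S.pathMap (some (a, g, b)) a = some a := by
      simpa only [hxx, S.pathMap_self hga hgb, Option.bind_some] using
        (congrFun (hm.pathMap_mul hR hns hx hx) b).symm
    -- `a = bμ` with `a(g·μ) = a`, so `μ` is trivial and `a = b`
    obtain ⟨μ, hμ, hab⟩ := S.isPrefix_of_pathMap_eq_some ha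
    have hμd : μ.rng = S.d g := hμ.trans hgb.symm
    have h' := S.pathMap_concat (a := a) g hμ
    rw [← hab, ha] at h'
    have hgμ := Pth.eq_ofVertex_of_concat_eq_self ((S.act_rng g μ hμd).trans hga)
      (Option.some.inj h').symm
    have hμv : μ = Pth.ofVertex b.src := by
      rw [Pth.eq_ofVertex_of_edges_eq_nil (S.edges_eq_nil_of_act hμd (by rw [hgμ]; rfl)), hμ]
    rw [hμv, Pth.concat_ofVertex] at hab
    subst hab
    have hgg := hm.mul_of_composable hR hns hga hgb hga hgb
    rw [hxx] at hgg
    have hmul : S.mul g g = g := (congrArg (fun z => z.2.1) (Option.some.inj hgg)).symm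
    exact ⟨a, by rw [S.eq_unit_of_mul_self (hgb.trans hga.symm) hmul, hga]⟩
  · rintro ⟨c, hc⟩
    rw [hc, hm.mul_of_composable hR hns (S.t_unit _) (S.d_unit _) (S.t_unit _) (S.d_unit _),
      S.unit_mul_unit]

theorem mul_comm_of_mul_self {x y : Option (Pth E × α × Pth E)} (hx : SGEMem S x)
    (hy : SGEMem S y) (hxx : m x x = x) (hyy : m y y = y) : m x y = m y x := by
  rcases eq_or_ne x none with rfl | hx0
  · rw [hm.zero_mul, hm.mul_zero]
  rcases eq_or_ne y none with rfl | hy0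
  · rw [hm.zero_mul, hm.mul_zero]
  obtain ⟨c, rfl⟩ := (hm.mul_self_iff hR hns hx hx0).mp hxx
  obtain ⟨e, rfl⟩ := (hm.mul_self_iff hR hns hy hy0).mp hyy
  refine S.pathMap_injOn (hm.mem_mul hR hns hx hy) (hm.mem_mul hR hns hy hx) ?_
  rw [hm.pathMap_mul hR hns hx hy, hm.pathMap_mul hR hns hy hx, S.pathMap_unit, S.pathMap_unit]
  funext π
  by_cases hc : c.IsPrefix π <;> by_cases he : e.IsPrefix π <;> simp [hc, he]

end IsSGEMul

theorem selfSimilar_inverse_semigroup_general {α : Type*} (E : DGraph)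
    (hns : ∀ v : E.V, ∃ e : E.Edge, E.r e = v)
    (S : SelfSimilar E α) (resP : α → Pth E → α)
    (hres_d : ∀ g μ, μ.rng = S.d g → S.d (resP g μ) = μ.src)
    (hres_spec : ∀ g μ ν, μ.rng = S.d g → ν.rng = μ.src →
        S.act g (μ.concat ν) = (S.act g μ).concat (S.act (resP g μ) ν))
    (m : Option (Pth E × α × Pth E) → Option (Pth E × α × Pth E) →
        Option (Pth E × α × Pth E))
    (hzero_l : ∀ x, m none x = none)
    (hzero_r : ∀ x, m x none = none)
    (hcase1 : ∀ (a : Pth E) (g : α) (b l : Pth E) (h : α) (w μ : Pth E),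
        S.t g = a.src → S.d g = b.src → S.t h = l.src → S.d h = w.src →
        μ.rng = l.src → b = l.concat μ →
        m (some (a, g, b)) (some (l, h, w)) =
          some (a, S.mul g (resP h (S.act (S.inv h) μ)),
            w.concat (S.act (S.inv h) μ)))
    (hcase2 : ∀ (a : Pth E) (g : α) (b l : Pth E) (h : α) (w μ : Pth E),
        S.t g = a.src → S.d g = b.src → S.t h = l.src → S.d h = w.src →
        μ.rng = b.src → l = b.concat μ →
        m (some (a, g, b)) (some (l, h, w)) =
          some (a.concat (S.act g μ), S.mul (resP g μ) h, w))
    (hcase3 : ∀ (a : Pth E) (g : α) (b l : Pth E) (h : α) (w : Pth E),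
        S.t g = a.src → S.d g = b.src → S.t h = l.src → S.d h = w.src →
        (¬∃ μ : Pth E, μ.rng = l.src ∧ b = l.concat μ) →
        (¬∃ μ : Pth E, μ.rng = b.src ∧ l = b.concat μ) →
        m (some (a, g, b)) (some (l, h, w)) = none) :
    (∀ x y z, SGEMem S x → SGEMem S y → SGEMem S z →
        m (m x y) z = m x (m y z)) ∧
    (∀ x, SGEMem S x →
        m (m x (SGEStar S x)) x = x ∧
        m (m (SGEStar S x) x) (SGEStar S x) = SGEStar S x) ∧
    (∀ x y, SGEMem S x → SGEMem S y → m x x = x → m y y = y → m x y = m y x) ∧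
    (∀ x, SGEMem S x → x ≠ none →
        (m x x = x ↔ ∃ a : Pth E, x = some (a, S.unit a.src, a))) ∧
    (∀ (a : Pth E) (g : α) (b : Pth E) (h : α) (w : Pth E),
        S.t g = a.src → S.d g = b.src → S.t h = b.src → S.d h = w.src →
        S.d g = S.t h →
        m (some (a, g, b)) (some (b, h, w)) = some (a, S.mul g h, w)) := by
  have hm : IsSGEMul S resP m := ⟨hzero_l, hzero_r, hcase1, hcase2, hcase3⟩
  have hR : S.IsPathRestriction resP := ⟨hres_d, hres_spec⟩
  refine ⟨fun x y z => hm.mul_assoc hR hns, fun x hx => ⟨hm.mul_star_mul hR hns hx, ?_⟩,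
    fun x y => hm.mul_comm_of_mul_self hR hns, fun x => hm.mul_self_iff hR hns,
    fun a g b h w hga hgb hhb hhw _ => hm.mul_of_composable hR hns hga hgb hhb hhw⟩
  simpa only [sgeStar_sgeStar] using hm.mul_star_mul hR hns (sgeMem_sgeStar hx)

/-- Let `(G, E)` be a self-similar groupoid action on the path
space of a finite directed graph `E` with no sources, and let
`𝒮(G, E) = {(α, g, β) : α, β ∈ E*, g ∈ G_{s β}^{s α}} ∪ {0}` with the multiplication
`(α, g, β)(λ, h, ω) = (α, g (h|_{h⁻¹·μ}), ω (h⁻¹·μ))` if `β = λ μ`,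
`= (α (g·μ), g|_μ h, ω)` if `λ = β μ`, `= 0` otherwise, and involution
`(α, g, β)* = (β, g⁻¹, α)`.  Then `𝒮(G, E)` is an inverse semigroup: the
multiplication is associative, every `s` satisfies `s s* s = s` and
`s* s s* = s*`, idempotents commute, and the nonzero idempotents are exactly the
elements `z_α = (α, s α, α)` for `α ∈ E*`.  Moreover
`(α, g, β)(β, h, ω) = (α, g h, ω)` whenever `(g, h)` is composable in `G`.
(Here `g|_μ` (`resP g μ`) denotes the restriction along a path.) -/
theorem selfSimilar_inverse_semigroup {α : Type*} (E : DGraph)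
    [Fintype E.V] [Fintype E.Edge] (hns : ∀ v : E.V, ∃ e : E.Edge, E.r e = v)
    (S : SelfSimilar E α) (resP : α → Pth E → α)
    (hres_d : ∀ g μ, μ.rng = S.d g → S.d (resP g μ) = μ.src)
    (hres_spec : ∀ g μ ν, μ.rng = S.d g → ν.rng = μ.src →
        S.act g (μ.concat ν) = (S.act g μ).concat (S.act (resP g μ) ν))
    (m : Option (Pth E × α × Pth E) → Option (Pth E × α × Pth E) →
        Option (Pth E × α × Pth E))
    (hzero_l : ∀ x, m none x = none)
    (hzero_r : ∀ x, m x none = none)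
    (hcase1 : ∀ (a : Pth E) (g : α) (b l : Pth E) (h : α) (w μ : Pth E),
        S.t g = a.src → S.d g = b.src → S.t h = l.src → S.d h = w.src →
        μ.rng = l.src → b = l.concat μ →
        m (some (a, g, b)) (some (l, h, w)) =
          some (a, S.mul g (resP h (S.act (S.inv h) μ)),
            w.concat (S.act (S.inv h) μ)))
    (hcase2 : ∀ (a : Pth E) (g : α) (b l : Pth E) (h : α) (w μ : Pth E),
        S.t g = a.src → S.d g = b.src → S.t h = l.src → S.d h = w.src →
        μ.rng = b.src → l = b.concat μ →
        m (some (a, g, b)) (some (l, h, w)) =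
          some (a.concat (S.act g μ), S.mul (resP g μ) h, w))
    (hcase3 : ∀ (a : Pth E) (g : α) (b l : Pth E) (h : α) (w : Pth E),
        S.t g = a.src → S.d g = b.src → S.t h = l.src → S.d h = w.src →
        (¬∃ μ : Pth E, μ.rng = l.src ∧ b = l.concat μ) →
        (¬∃ μ : Pth E, μ.rng = b.src ∧ l = b.concat μ) →
        m (some (a, g, b)) (some (l, h, w)) = none) :
    (∀ x y z, SGEMem S x → SGEMem S y → SGEMem S z →
        m (m x y) z = m x (m y z)) ∧
    (∀ x, SGEMem S x →
        m (m x (SGEStar S x)) x = x ∧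
        m (m (SGEStar S x) x) (SGEStar S x) = SGEStar S x) ∧
    (∀ x y, SGEMem S x → SGEMem S y → m x x = x → m y y = y → m x y = m y x) ∧
    (∀ x, SGEMem S x → x ≠ none →
        (m x x = x ↔ ∃ a : Pth E, x = some (a, S.unit a.src, a))) ∧
    (∀ (a : Pth E) (g : α) (b : Pth E) (h : α) (w : Pth E),
        S.t g = a.src → S.d g = b.src → S.t h = b.src → S.d h = w.src →
        S.d g = S.t h →
        m (some (a, g, b)) (some (b, h, w)) = some (a, S.mul g h, w)) :=
  selfSimilar_inverse_semigroup_general E hns S resP hres_d hres_spec m hzero_l hzero_r hcase1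
    hcase2 hcase3
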